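/- Let T > 0 and let u, v : [0,T] × ℝ → ℝ be twice continuously differentiable with u(t,x) > 0 and v(t,x) > 0 everywhere, satisfying ∂_t u = ∂_x(u ∂_x(u+v)) and ∂_t v = ∂_x(v ∂_x(u+v)) on (0,T) × ℝ. Assume there exists R > 0 such that u(t,x) = v(t,x) for all t ∈ [0,T] and |x| ≥ R, and that for each t the functions u(t,·) and v(t,·) are probability densities on ℝ (nonnegative with ∫_ℝ u(t,x) dx = ∫_ℝ v(t,x) dx = 1). Then for every t ∈ [0,T] the total variation distance satisfies ∫_ℝ |u(t,x) − v(t,x)| dx ≤ √( 2 H(u(0)||v(0)) ), where H(u(0)||v(0)) = ∫_ℝ u(0,x) log( u(0,x)/v(0,x) ) dx. -/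

import Mathlib

/-!
Write `φ = u ∂ₓ(u+v)` and `ψ = v ∂ₓ(u+v)`, so that `∂ₜu = ∂ₓφ` and `∂ₜv = ∂ₓψ`. The entropy
density `e = u log (u/v)` then satisfies `∂ₜe = ∂ₓφ (log (u/v) + 1) - (u/v) ∂ₓψ = ∂ₓ(φ log (u/v))`,
an exact derivative whose primitive vanishes where `u = v`, i.e. for `|x| ≥ R`. Hence
`H(u(t)‖v(t))` is constant in time. Pinsker's inequality at time `t` bounds the total variation by
`√(2 H(u(t)‖v(t)))`; it follows by Cauchy–Schwarz from the pointwise bound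
`3 (a - b)² ≤ (2a + 4b) (a log (a/b) - a + b)`.
-/

open Real Set MeasureTheory

/-- Partial derivative in the first (time) variable. -/
noncomputable def pt (f : ℝ → ℝ → ℝ) (t x : ℝ) : ℝ := deriv (fun s => f s x) t

/-- Partial derivative in the second (space) variable. -/
noncomputable def px (f : ℝ → ℝ → ℝ) (t x : ℝ) : ℝ := deriv (fun y => f t y) x

open Function InformationTheory

theorem isMinOn_of_hasDerivAt_of_sub_mul_nonneg {f f' : ℝ → ℝ} {s : Set ℝ} {c : ℝ}
    (hs : Convex ℝ s) (hc : c ∈ s) (hf : ∀ x ∈ s, HasDerivAt f (f' x) x)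
    (hsign : ∀ x ∈ s, 0 ≤ (x - c) * f' x) : IsMinOn f s c := by
  have hcont : ContinuousOn f s := fun y hy => (hf y hy).continuousAt.continuousWithinAt
  have mvt : ∀ {a b}, a ∈ s → b ∈ s → a < b →
      ∃ ξ ∈ Ioo a b, 0 ≤ (ξ - c) * f' ξ ∧ f b - f a = f' ξ * (b - a) := by
    intro a b ha hb hab
    have hsub : Icc a b ⊆ s := hs.ordConnected.out ha hb
    obtain ⟨ξ, hξ, hslope⟩ := exists_hasDerivAt_eq_slope f f' hab (hcont.mono hsub)
      fun y hy => hf y (hsub (Ioo_subset_Icc_self hy))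
    refine ⟨ξ, hξ, hsign ξ (hsub (Ioo_subset_Icc_self hξ)), ?_⟩
    rw [hslope, div_mul_cancel₀ _ (sub_ne_zero.2 hab.ne')]
  intro x hx
  show f c ≤ f x
  rcases lt_trichotomy x c with hxc | rfl | hcx
  · obtain ⟨ξ, hξ, hsg, hdiff⟩ := mvt hx hc hxc
    nlinarith [hξ.1, hξ.2]
  · exact le_rfl
  · obtain ⟨ξ, hξ, hsg, hdiff⟩ := mvt hc hx hcx
    nlinarith [hξ.1, hξ.2]

theorem constant_of_hasDerivAt_zero {f : ℝ → ℝ} {a b : ℝ} (hf : ContinuousOn f (Icc a b))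
    (hderiv : ∀ x ∈ Ioo a b, HasDerivAt f 0 x) : ∀ x ∈ Icc a b, f x = f a := by
  intro x hx
  rcases hx.1.eq_or_lt with rfl | hax
  · rfl
  obtain ⟨c, hc, hslope⟩ := exists_hasDerivAt_eq_slope f (fun _ => 0) hax
    (hf.mono (Icc_subset_Icc_right hx.2)) fun y hy => hderiv y ⟨hy.1, hy.2.trans_le hx.2⟩
  rw [eq_comm, div_eq_zero_iff, sub_eq_zero] at hslope
  exact hslope.resolve_right (sub_ne_zero.2 hax.ne')

section PartialDeriv

variable {f : ℝ → ℝ → ℝ} {s : Set (ℝ × ℝ)}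

theorem ContDiffOn.contDiff_uncurry_slice {n : WithTop ℕ∞} {S : Set ℝ} {t : ℝ}
    (hf : ContDiffOn ℝ n (uncurry f) (S ×ˢ univ)) (ht : t ∈ S) : ContDiff ℝ n (f t) :=
  contDiffOn_univ.1 <| hf.comp (contDiff_const.prodMk contDiff_id).contDiffOn
    fun y _ => ⟨ht, mem_univ y⟩

theorem hasDerivAt_fderiv_apply_one_zero (hf : ContDiffOn ℝ 1 (uncurry f) s) (hs : IsOpen s)
    {p : ℝ × ℝ} (hp : p ∈ s) : HasDerivAt (f · p.2) (fderiv ℝ (uncurry f) p (1, 0)) p.1 := by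
  have hline : HasDerivAt (fun τ : ℝ => (τ, p.2)) (1, 0) p.1 :=
    (hasDerivAt_id p.1).prodMk (hasDerivAt_const p.1 p.2)
  exact ((hf.differentiableOn one_ne_zero p hp).differentiableAt
    (hs.mem_nhds hp)).hasFDerivAt.comp_hasDerivAt p.1 hline

theorem continuousOn_pt (hf : ContDiffOn ℝ 1 (uncurry f) s) (hs : IsOpen s) :
    ContinuousOn (uncurry (pt f)) s :=
  ((ContinuousLinearMap.apply ℝ ℝ ((1 : ℝ), (0 : ℝ))).continuous.comp_continuousOn
    (hf.continuousOn_fderiv_of_isOpen hs le_rfl)).congr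
    fun _ hp => (hasDerivAt_fderiv_apply_one_zero hf hs hp).deriv

theorem hasDerivAt_pt (hf : ContDiffOn ℝ 1 (uncurry f) s) (hs : IsOpen s) {t x : ℝ}
    (hp : (t, x) ∈ s) : HasDerivAt (f · x) (pt f t x) t :=
  (hasDerivAt_fderiv_apply_one_zero hf hs hp).differentiableAt.hasDerivAt

end PartialDeriv

section ParametricIntegral

variable {F F' : ℝ → ℝ → ℝ} {a b c d : ℝ}

theorem continuousOn_intervalIntegral_of_continuousOn_Icc_prod (hcd : c ≤ d)
    (hF : ContinuousOn (uncurry F) (Icc c d ×ˢ univ)) :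
    ContinuousOn (fun t => ∫ x in a..b, F t x) (Icc c d) := by
  have hext : Continuous (uncurry fun t x => F (projIcc c d hcd t) x) :=
    hF.comp_continuous (f := fun p : ℝ × ℝ => ((projIcc c d hcd p.1 : ℝ), p.2)) (by fun_prop)
      fun p => ⟨Subtype.mem _, mem_univ _⟩
  refine (intervalIntegral.continuous_parametric_intervalIntegral_of_continuous'
    (μ := volume) hext a b).continuousOn.congr fun t ht => ?_
  simp only [projIcc_of_mem hcd ht]

theorem hasDerivAt_intervalIntegral_of_continuousOn {U : Set ℝ} {t₀ : ℝ} (hU : IsOpen U)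
    (ht₀ : t₀ ∈ U) (hF : ∀ t ∈ U, Continuous (F t))
    (hF' : ContinuousOn (uncurry F') (U ×ˢ univ))
    (hderiv : ∀ t ∈ U, ∀ x, HasDerivAt (F · x) (F' t x) t) :
    HasDerivAt (fun t => ∫ x in a..b, F t x) (∫ x in a..b, F' t₀ x) t₀ := by
  obtain ⟨ε, hε, hball⟩ := Metric.nhds_basis_closedBall.mem_iff.1 (hU.mem_nhds ht₀)
  obtain ⟨M, hM⟩ := (isCompact_closedBall t₀ ε |>.prod isCompact_uIcc).exists_bound_of_continuousOn
    (hF'.mono (prod_mono hball (subset_univ (uIcc a b))))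
  refine (intervalIntegral.hasDerivAt_integral_of_dominated_loc_of_deriv_le (bound := fun _ => M)
    (Metric.closedBall_mem_nhds t₀ hε) ?_ ((hF t₀ ht₀).intervalIntegrable a b) ?_ ?_
    intervalIntegrable_const ?_).2
  · filter_upwards [hU.mem_nhds ht₀] with t ht using (hF t ht).aestronglyMeasurable
  · exact (hF'.comp_continuous (f := fun x => (t₀, x)) (by fun_prop)
      fun x => ⟨ht₀, mem_univ x⟩).aestronglyMeasurable
  · exact .of_forall fun x hx t ht => hM (t, x) ⟨ht, uIoc_subset_uIcc hx⟩
  · exact .of_forall fun x _ t ht => hderiv t (hball ht) x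

theorem intervalIntegral_eq_left_of_integral_deriv_eq_zero
    (hF : ContinuousOn (uncurry F) (Icc c d ×ˢ univ))
    (hF' : ContinuousOn (uncurry F') (Ioo c d ×ˢ univ))
    (hderiv : ∀ t ∈ Ioo c d, ∀ x, HasDerivAt (F · x) (F' t x) t)
    (hzero : ∀ t ∈ Ioo c d, ∫ x in a..b, F' t x = 0) :
    ∀ t ∈ Icc c d, ∫ x in a..b, F t x = ∫ x in a..b, F c x := by
  intro t ht
  refine constant_of_hasDerivAt_zero
    (continuousOn_intervalIntegral_of_continuousOn_Icc_prod (ht.1.trans ht.2) hF)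
    (fun s hs => ?_) t ht
  rw [← hzero s hs]
  exact hasDerivAt_intervalIntegral_of_continuousOn isOpen_Ioo hs
    (fun τ hτ => hF.comp_continuous (f := fun x => (τ, x)) (by fun_prop)
      fun x => ⟨Ioo_subset_Icc_self hτ, mem_univ x⟩)
    hF' hderiv

end ParametricIntegral

section PointwisePinsker

theorem sub_one_mul_add_one_mul_log_sub_nonneg {r : ℝ} (hr : 0 < r) :
    0 ≤ (r - 1) * ((r + 1) * log r - 2 * (r - 1)) := by
  set g : ℝ → ℝ := fun r => (r + 1) * log r - 2 * (r - 1)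
  have hg : ∀ x ∈ Ioi (0 : ℝ), HasDerivAt g (log x + x⁻¹ - 1) x := fun x hx => by
    have hx0 : x ≠ 0 := (mem_Ioi.1 hx).ne'
    refine ((((hasDerivAt_id x).add_const 1).mul (hasDerivAt_log hx0)).sub
      (((hasDerivAt_id x).sub_const 1).const_mul 2)).congr_deriv ?_
    simp only [id]
    field_simp
    ring
  have hmono : MonotoneOn g (Ioi 0) := by
    refine monotoneOn_of_hasDerivWithinAt_nonneg (f' := fun x => log x + x⁻¹ - 1) (convex_Ioi 0)
      (fun x hx => (hg x hx).continuousAt.continuousWithinAt) ?_ ?_ <;>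
    rw [interior_Ioi]
    · exact fun x hx => (hg x hx).hasDerivWithinAt
    · intro x hx
      linarith [one_sub_inv_le_log_of_pos (mem_Ioi.1 hx)]
  have hg1 : g 1 = 0 := by simp [g]
  rcases le_total r 1 with h | h
  · exact mul_nonneg_of_nonpos_of_nonpos (by linarith)
      (hg1 ▸ hmono hr (mem_Ioi.2 one_pos) h)
  · exact mul_nonneg (by linarith) (hg1 ▸ hmono (mem_Ioi.2 one_pos) hr h)

theorem three_mul_sq_sub_one_le_mul_klFun {r : ℝ} (hr : 0 < r) :
    3 * (r - 1) ^ 2 ≤ (2 * r + 4) * klFun r := by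
  set h : ℝ → ℝ := fun r => (2 * r + 4) * klFun r - 3 * (r - 1) ^ 2
  have hh : ∀ x ∈ Ioi (0 : ℝ), HasDerivAt h (4 * ((x + 1) * log x - 2 * (x - 1))) x :=
    fun x hx => by
      refine (((((hasDerivAt_id x).const_mul 2).add_const 4).mul
        (hasDerivAt_klFun (mem_Ioi.1 hx).ne')).sub
        ((((hasDerivAt_id x).sub_const 1).pow 2).const_mul 3)).congr_deriv ?_
      simp only [klFun_apply, id]
      ring
  have hmin := isMinOn_of_hasDerivAt_of_sub_mul_nonneg (convex_Ioi 0) (mem_Ioi.2 one_pos) hh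
    fun x hx => by nlinarith [sub_one_mul_add_one_mul_log_sub_nonneg (mem_Ioi.1 hx)]
  have := hmin (mem_Ioi.2 hr)
  simp only [mem_ofPred_eq, h, klFun_one] at this
  linarith

theorem mul_klFun_div {a b : ℝ} (hb : b ≠ 0) :
    b * klFun (a / b) = a * log (a / b) + b - a := by
  rw [klFun]
  field_simp

theorem three_mul_sq_sub_le_mul_mul_klFun_div {a b : ℝ} (ha : 0 < a) (hb : 0 < b) :
    3 * (a - b) ^ 2 ≤ (2 * a + 4 * b) * (b * klFun (a / b)) := by
  have h := three_mul_sq_sub_one_le_mul_klFun (div_pos ha hb)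
  have e1 : (a - b) ^ 2 = b ^ 2 * (a / b - 1) ^ 2 := by field_simp
  have e2 : (2 * a + 4 * b) * (b * klFun (a / b))
      = b ^ 2 * ((2 * (a / b) + 4) * klFun (a / b)) := by
    field_simp
  rw [e1, e2]
  nlinarith [mul_le_mul_of_nonneg_left h (sq_nonneg b)]

end PointwisePinsker

noncomputable def relEntropy {α : Type*} [MeasurableSpace α] (μ : Measure α) (f g : α → ℝ) : ℝ :=
  ∫ x, f x * log (f x / g x) ∂μ

section Pinsker

variable {α : Type*} [MeasurableSpace α] {μ : Measure α}

theorem integral_le_sqrt_mul_sqrt_of_sq_le_mul {f A B : α → ℝ} (hA : Integrable A μ)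
    (hB : Integrable B μ) (hA0 : ∀ x, 0 ≤ A x) (hB0 : ∀ x, 0 ≤ B x)
    (hfAB : ∀ x, f x ^ 2 ≤ A x * B x) :
    ∫ x, f x ∂μ ≤ √(∫ x, A x ∂μ) * √(∫ x, B x ∂μ) := by
  have hL2 : ∀ {g : α → ℝ}, Integrable g μ → (∀ x, 0 ≤ g x) → MemLp (fun x => √(g x)) 2 μ := by
    intro g hg hg0
    rw [memLp_two_iff_integrable_sq (continuous_sqrt.comp_aestronglyMeasurable hg.1)]
    simpa only [sq_sqrt (hg0 _)] using hg
  by_cases hf : Integrable f μ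
  swap
  · rw [integral_undef hf]; positivity
  calc ∫ x, f x ∂μ ≤ ∫ x, √(A x) * √(B x) ∂μ := integral_mono hf
        ((hL2 hA hA0).integrable_mul (hL2 hB hB0)) fun x => by
          rw [← sqrt_mul (hA0 x)]
          exact (le_abs_self _).trans (abs_le_sqrt (hfAB x))
    _ ≤ (∫ x, A x ∂μ) ^ (1 / 2 : ℝ) * (∫ x, B x ∂μ) ^ (1 / 2 : ℝ) := by
        simpa [sq_sqrt, hA0, hB0] using integral_mul_le_Lp_mul_Lq_of_nonneg
          HolderConjugate.two_two (.of_forall fun x => sqrt_nonneg (A x))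
          (.of_forall fun x => sqrt_nonneg (B x))
          (ENNReal.ofReal_ofNat 2 ▸ hL2 hA hA0) (ENNReal.ofReal_ofNat 2 ▸ hL2 hB hB0)
    _ = √(∫ x, A x ∂μ) * √(∫ x, B x ∂μ) := by rw [sqrt_eq_rpow, sqrt_eq_rpow]

theorem integral_abs_sub_le_sqrt_two_mul_relEntropy {U V : α → ℝ} (hU : ∀ x, 0 < U x)
    (hV : ∀ x, 0 < V x) (hUV : Integrable (fun x => U x * log (U x / V x)) μ)
    (hUm : ∫ x, U x ∂μ = 1) (hVm : ∫ x, V x ∂μ = 1) :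
    ∫ x, |U x - V x| ∂μ ≤ √(2 * relEntropy μ U V) := by
  have hUi : Integrable U μ := .of_integral_ne_zero (by simp [hUm])
  have hVi : Integrable V μ := .of_integral_ne_zero (by simp [hVm])
  have hBeq : (fun x => V x * klFun (U x / V x)) = fun x => U x * log (U x / V x) + V x - U x :=
    funext fun x => mul_klFun_div (hV x).ne'
  have hBi : Integrable (fun x => V x * klFun (U x / V x)) μ := by
    rw [hBeq]; exact (hUV.add hVi).sub hUi
  have key := integral_le_sqrt_mul_sqrt_of_sq_le_mul (f := fun x => |U x - V x|)
    (A := fun x => (2 * U x + 4 * V x) / 3)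
    (((hUi.const_mul 2).add (hVi.const_mul 4)).div_const 3) hBi
    (fun x => by have := hU x; have := hV x; positivity)
    (fun x => mul_nonneg (hV x).le (klFun_nonneg (div_pos (hU x) (hV x)).le))
    fun x => by
      rw [sq_abs, div_mul_eq_mul_div, le_div_iff₀ three_pos, mul_comm]
      exact three_mul_sq_sub_le_mul_mul_klFun_div (hU x) (hV x)
  have hA : ∫ x, (2 * U x + 4 * V x) / 3 ∂μ = 2 := by
    rw [integral_div, integral_add (hUi.const_mul 2) (hVi.const_mul 4), integral_const_mul,
      integral_const_mul, hUm, hVm]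
    norm_num
  have hB : ∫ x, V x * klFun (U x / V x) ∂μ = relEntropy μ U V := by
    rw [hBeq, integral_sub (by exact hUV.add hVi) hUi, integral_add hUV hVi, hUm, hVm,
      relEntropy]
    ring
  rwa [hA, hB, ← sqrt_mul zero_le_two] at key

end Pinsker

theorem HasDerivAt.mul_log_div {f g : ℝ → ℝ} {f' g' x : ℝ} (hf : HasDerivAt f f' x)
    (hg : HasDerivAt g g' x) (hfx : f x ≠ 0) (hgx : g x ≠ 0) :
    HasDerivAt (fun y => f y * Real.log (f y / g y))
      (f' * (Real.log (f x / g x) + 1) - f x / g x * g') x := by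
  refine (hf.fun_mul ((hf.fun_div hg hgx).log (div_ne_zero hfx hgx))).congr_deriv ?_
  field_simp
  ring

theorem HasDerivAt.mul_mul_log_div {U V w : ℝ → ℝ} {U' V' w' x : ℝ} (hU : HasDerivAt U U' x)
    (hV : HasDerivAt V V' x) (hw : HasDerivAt w w' x) (hUx : U x ≠ 0) (hVx : V x ≠ 0) :
    HasDerivAt (fun y => U y * w y * Real.log (U y / V y))
      ((U' * w x + U x * w') * (Real.log (U x / V x) + 1) - U x / V x * (V' * w x + V x * w'))
      x := by
  have hcomm : (fun y => U y * w y * Real.log (U y / V y))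
      = fun y => w y * (U y * Real.log (U y / V y)) := funext fun y => by ring
  rw [hcomm]
  refine (hw.fun_mul (hU.mul_log_div hV hUx hVx)).congr_deriv ?_
  field_simp
  ring

theorem intervalIntegral_entropy_rate_eq_zero {U V : ℝ → ℝ} {a b : ℝ} (hU : ContDiff ℝ 2 U)
    (hV : ContDiff ℝ 2 V) (hUpos : ∀ x, 0 < U x) (hVpos : ∀ x, 0 < V x) (ha : U a = V a)
    (hb : U b = V b) :
    ∫ x in a..b, (deriv (fun y => U y * deriv (fun z => U z + V z) y) x * (log (U x / V x) + 1)
      - U x / V x * deriv (fun y => V y * deriv (fun z => U z + V z) y) x) = 0 := by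
  set w := deriv (fun z => U z + V z)
  have hw : ContDiff ℝ 1 w := (hU.add hV).deriv'
  have hU1 : ContDiff ℝ 1 U := hU.of_le one_le_two
  have hV1 : ContDiff ℝ 1 V := hV.of_le one_le_two
  have hderiv : ∀ x, HasDerivAt (fun y => U y * w y * log (U y / V y))
      (deriv (fun y => U y * w y) x * (log (U x / V x) + 1)
        - U x / V x * deriv (fun y => V y * w y) x) x := by
    intro x
    have hUd := (hU1.differentiable one_ne_zero x).hasDerivAt
    have hVd := (hV1.differentiable one_ne_zero x).hasDerivAt
    have hwd := (hw.differentiable one_ne_zero x).hasDerivAt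
    rw [(hUd.fun_mul hwd).deriv, (hVd.fun_mul hwd).deriv]
    exact hUd.mul_mul_log_div hVd hwd (hUpos x).ne' (hVpos x).ne'
  have hcont : Continuous fun x => deriv (fun y => U y * w y) x * (log (U x / V x) + 1)
      - U x / V x * deriv (fun y => V y * w y) x := by
    have hUV : Continuous fun x => U x / V x :=
      hU.continuous.div hV.continuous fun x => (hVpos x).ne'
    exact (((hU1.mul hw).continuous_deriv le_rfl).mul
      ((hUV.log fun x => (div_pos (hUpos x) (hVpos x)).ne').add continuous_const)).sub
      (hUV.mul ((hV1.mul hw).continuous_deriv le_rfl))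
  rw [intervalIntegral.integral_eq_sub_of_hasDerivAt (fun x _ => hderiv x)
    (hcont.intervalIntegrable a b), ha, hb]
  simp [div_self (hVpos a).ne', div_self (hVpos b).ne']

section CompactlySupported

variable {U V : ℝ → ℝ} {R : ℝ}

theorem support_mul_log_div_subset (h : ∀ x, R ≤ |x| → U x = V x) :
    support (fun x => U x * log (U x / V x)) ⊆ Ioo (-R) R := fun x hx => by
  by_contra hR
  rw [mem_Ioo, ← abs_lt, not_lt] at hR
  exact hx (by simp [h x hR])

theorem relEntropy_eq_intervalIntegral (h : ∀ x, R ≤ |x| → U x = V x) :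
    relEntropy volume U V = ∫ x in -R..R, U x * log (U x / V x) :=
  (intervalIntegral.integral_eq_integral_of_support_subset
    ((support_mul_log_div_subset h).trans Ioo_subset_Ioc_self)).symm

theorem integrable_mul_log_div (hU : Continuous U) (hV : Continuous V) (hUpos : ∀ x, 0 < U x)
    (hVpos : ∀ x, 0 < V x) (h : ∀ x, R ≤ |x| → U x = V x) :
    Integrable fun x => U x * log (U x / V x) :=
  (hU.mul ((hU.div hV fun x => (hVpos x).ne').log fun x => (div_pos (hUpos x) (hVpos x)).ne')
    ).integrable_of_hasCompactSupport <| HasCompactSupport.of_support_subset_isCompact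
      isCompact_Icc ((support_mul_log_div_subset h).trans Ioo_subset_Icc_self)

end CompactlySupported

theorem relEntropy_eq_relEntropy_zero {T R : ℝ} {u v : ℝ → ℝ → ℝ}
    (husmooth : ContDiffOn ℝ 2 (uncurry u) (Icc 0 T ×ˢ univ))
    (hvsmooth : ContDiffOn ℝ 2 (uncurry v) (Icc 0 T ×ˢ univ))
    (hupos : ∀ t x : ℝ, 0 < u t x) (hvpos : ∀ t x : ℝ, 0 < v t x)
    (hu : ∀ t ∈ Ioo (0:ℝ) T, ∀ x : ℝ,
      pt u t x = px (fun s y => u s y * px (fun a b => u a b + v a b) s y) t x)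
    (hv : ∀ t ∈ Ioo (0:ℝ) T, ∀ x : ℝ,
      pt v t x = px (fun s y => v s y * px (fun a b => u a b + v a b) s y) t x)
    (hdecay : ∀ t ∈ Icc (0:ℝ) T, ∀ x : ℝ, R ≤ |x| → u t x = v t x) :
    ∀ t ∈ Icc (0:ℝ) T, relEntropy volume (u t) (v t) = relEntropy volume (u 0) (v 0) := by
  intro t ht
  have hopen : IsOpen (Ioo 0 T ×ˢ (univ : Set ℝ)) := isOpen_Ioo.prod isOpen_univ
  have hinterior : Ioo 0 T ×ˢ (univ : Set ℝ) ⊆ Icc 0 T ×ˢ univ :=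
    prod_mono Ioo_subset_Icc_self subset_rfl
  have hu1 := (husmooth.mono hinterior).of_le one_le_two
  have hv1 := (hvsmooth.mono hinterior).of_le one_le_two
  have huc := husmooth.continuousOn
  have hquot : ContinuousOn (fun p : ℝ × ℝ => u p.1 p.2 / v p.1 p.2) (Icc 0 T ×ˢ univ) :=
    huc.div hvsmooth.continuousOn fun p _ => (hvpos p.1 p.2).ne'
  have hlog : ContinuousOn (fun p : ℝ × ℝ => log (u p.1 p.2 / v p.1 p.2)) (Icc 0 T ×ˢ univ) :=
    hquot.log fun p _ => (div_pos (hupos p.1 p.2) (hvpos p.1 p.2)).ne'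
  rw [relEntropy_eq_intervalIntegral (hdecay t ht),
    relEntropy_eq_intervalIntegral (hdecay 0 ⟨le_rfl, ht.1.trans ht.2⟩)]
  refine intervalIntegral_eq_left_of_integral_deriv_eq_zero
    (F := fun t x => u t x * log (u t x / v t x))
    (F' := fun t x => pt u t x * (log (u t x / v t x) + 1) - u t x / v t x * pt v t x)
    (huc.mul hlog) ?_ ?_ ?_ t ht
  · exact ((continuousOn_pt hu1 hopen).mul ((hlog.mono hinterior).add continuousOn_const)).sub
      ((hquot.mono hinterior).mul (continuousOn_pt hv1 hopen))
  · intro τ hτ x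
    exact (hasDerivAt_pt hu1 hopen ⟨hτ, mem_univ x⟩).mul_log_div
      (hasDerivAt_pt hv1 hopen ⟨hτ, mem_univ x⟩) (hupos τ x).ne' (hvpos τ x).ne'
  · intro τ hτ
    have hτ' := Ioo_subset_Icc_self hτ
    rw [← intervalIntegral_entropy_rate_eq_zero (husmooth.contDiff_uncurry_slice hτ')
      (hvsmooth.contDiff_uncurry_slice hτ') (hupos τ) (hvpos τ)
      (hdecay τ hτ' (-R) (abs_neg R ▸ le_abs_self R)) (hdecay τ hτ' R (le_abs_self R))]
    refine intervalIntegral.integral_congr fun x _ => ?_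
    simp only [hu τ hτ x, hv τ hτ x]
    rfl

theorem stmt_12_general (T : ℝ) (u v : ℝ → ℝ → ℝ)
    (husmooth : ContDiffOn ℝ 2 (Function.uncurry u) (Icc 0 T ×ˢ univ))
    (hvsmooth : ContDiffOn ℝ 2 (Function.uncurry v) (Icc 0 T ×ˢ univ))
    (hupos : ∀ t x : ℝ, 0 < u t x) (hvpos : ∀ t x : ℝ, 0 < v t x)
    (hu : ∀ t ∈ Ioo (0:ℝ) T, ∀ x : ℝ,
      pt u t x = px (fun s y => u s y * px (fun a b => u a b + v a b) s y) t x)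
    (hv : ∀ t ∈ Ioo (0:ℝ) T, ∀ x : ℝ,
      pt v t x = px (fun s y => v s y * px (fun a b => u a b + v a b) s y) t x)
    (R : ℝ)
    (hdecay : ∀ t ∈ Icc (0:ℝ) T, ∀ x : ℝ, R ≤ |x| → u t x = v t x)
    (humass : ∀ t ∈ Icc (0:ℝ) T, ∫ x, u t x = 1)
    (hvmass : ∀ t ∈ Icc (0:ℝ) T, ∫ x, v t x = 1) :
    ∀ t ∈ Icc (0:ℝ) T,
      ∫ x, |u t x - v t x|
        ≤ Real.sqrt (2 * ∫ x, u 0 x * Real.log (u 0 x / v 0 x)) := by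
  intro t ht
  have hint := integrable_mul_log_div (husmooth.contDiff_uncurry_slice ht).continuous
    (hvsmooth.contDiff_uncurry_slice ht).continuous (hupos t) (hvpos t) (hdecay t ht)
  calc ∫ x, |u t x - v t x|
      ≤ √(2 * relEntropy volume (u t) (v t)) :=
        integral_abs_sub_le_sqrt_two_mul_relEntropy (hupos t) (hvpos t) hint (humass t ht)
          (hvmass t ht)
    _ = √(2 * relEntropy volume (u 0) (v 0)) := by
        rw [relEntropy_eq_relEntropy_zero husmooth hvsmooth hupos hvpos hu hv hdecay t ht]

/-- Total variation estimate: for positive probability-density solutions of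
`∂ₜu = ∂ₓ(u ∂ₓ(u+v))`, `∂ₜv = ∂ₓ(v ∂ₓ(u+v))` on `(0,T) × ℝ` agreeing outside a
compact set, `‖u(t) − v(t)‖_{L¹} ≤ √(2 H(u(0)‖v(0)))` for all `t ∈ [0,T]`. -/
theorem stmt_12 (T : ℝ) (hT : 0 < T) (u v : ℝ → ℝ → ℝ)
    (husmooth : ContDiffOn ℝ 2 (Function.uncurry u) (Icc 0 T ×ˢ univ))
    (hvsmooth : ContDiffOn ℝ 2 (Function.uncurry v) (Icc 0 T ×ˢ univ))
    (hupos : ∀ t x : ℝ, 0 < u t x) (hvpos : ∀ t x : ℝ, 0 < v t x)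
    (hu : ∀ t ∈ Ioo (0:ℝ) T, ∀ x : ℝ,
      pt u t x = px (fun s y => u s y * px (fun a b => u a b + v a b) s y) t x)
    (hv : ∀ t ∈ Ioo (0:ℝ) T, ∀ x : ℝ,
      pt v t x = px (fun s y => v s y * px (fun a b => u a b + v a b) s y) t x)
    (R : ℝ) (hR : 0 < R)
    (hdecay : ∀ t ∈ Icc (0:ℝ) T, ∀ x : ℝ, R ≤ |x| → u t x = v t x)
    (huint : ∀ t ∈ Icc (0:ℝ) T, Integrable (u t))
    (hvint : ∀ t ∈ Icc (0:ℝ) T, Integrable (v t))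
    (humass : ∀ t ∈ Icc (0:ℝ) T, ∫ x, u t x = 1)
    (hvmass : ∀ t ∈ Icc (0:ℝ) T, ∫ x, v t x = 1) :
    ∀ t ∈ Icc (0:ℝ) T,
      ∫ x, |u t x - v t x|
        ≤ Real.sqrt (2 * ∫ x, u 0 x * Real.log (u 0 x / v 0 x)) :=
  stmt_12_general T u v husmooth hvsmooth hupos hvpos hu hv R hdecay humass hvmass
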